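/- arXiv:2106.14083 — 2 statements merged into one kernel-verified Lean document; each statement's English description precedes it below -/
import Mathlib

section
/- The map (p_1, p_2) ↦ (θ, κ) given by e^θ = p_2(1-p_1)/(p_1+(1-p_2)(1-p_1)) and e^κ = (p_1 + p_2(1-p_2)(1-p_1)^2)/(p_2(1-p_2)(1-p_1)^2) is a bijection from (0,1) × (0,1) onto its image in ℝ × (0,∞), with inverse p_1 = e^θ(e^κ-1)/((e^{θ+κ}+1)(e^θ+1)), p_2 = e^θ(e^{θ+κ}+1)/(e^{2θ+κ}+2e^θ+1). -/
/-- The map `(p₁,p₂) ↦ (θ,κ)` from NDARMA(1) parameters to Ising parameters. -/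
noncomputable def isingMap (p : ℝ × ℝ) : ℝ × ℝ :=
  (Real.log (p.2 * (1 - p.1) / (p.1 + (1 - p.2) * (1 - p.1))),
   Real.log ((p.1 + p.2 * (1 - p.2) * (1 - p.1) ^ 2) / (p.2 * (1 - p.2) * (1 - p.1) ^ 2)))

lemma ising_aux (x y : ℝ) (hx0 : 0 < x) (hx1 : x < 1) (hy0 : 0 < y) (hy1 : y < 1) :
    0 < y * (1 - x) / (x + (1 - y) * (1 - x)) ∧
    1 < (x + y * (1 - y) * (1 - x) ^ 2) / (y * (1 - y) * (1 - x) ^ 2) ∧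
    (x = (y * (1 - x) / (x + (1 - y) * (1 - x))) *
        ((x + y * (1 - y) * (1 - x) ^ 2) / (y * (1 - y) * (1 - x) ^ 2) - 1) /
        (((y * (1 - x) / (x + (1 - y) * (1 - x))) *
          ((x + y * (1 - y) * (1 - x) ^ 2) / (y * (1 - y) * (1 - x) ^ 2)) + 1) *
         ((y * (1 - x) / (x + (1 - y) * (1 - x))) + 1)) ∧
     y = (y * (1 - x) / (x + (1 - y) * (1 - x))) *
        ((y * (1 - x) / (x + (1 - y) * (1 - x))) *
          ((x + y * (1 - y) * (1 - x) ^ 2) / (y * (1 - y) * (1 - x) ^ 2)) + 1) /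
        ((y * (1 - x) / (x + (1 - y) * (1 - x))) ^ 2 *
          ((x + y * (1 - y) * (1 - x) ^ 2) / (y * (1 - y) * (1 - x) ^ 2)) +
         2 * (y * (1 - x) / (x + (1 - y) * (1 - x))) + 1)) := by
  have hx1' : 0 < 1 - x := by linarith
  have hy1' : 0 < 1 - y := by linarith
  have hd1 : 0 < x + (1 - y) * (1 - x) := by positivity
  have hd2 : 0 < y * (1 - y) * (1 - x) ^ 2 := by positivity
  refine ⟨by positivity, ?_, ?_, ?_⟩
  · rw [lt_div_iff₀ hd2]; nlinarith
  · rw [eq_div_iff]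
    · field_simp
      ring
    · have ha : 0 < y * (1 - x) / (x + (1 - y) * (1 - x)) := by positivity
      have hb : 0 < (x + y * (1 - y) * (1 - x) ^ 2) / (y * (1 - y) * (1 - x) ^ 2) := by positivity
      positivity
  · rw [eq_div_iff]
    · field_simp
      ring
    · have ha : 0 < y * (1 - x) / (x + (1 - y) * (1 - x)) := by positivity
      have hb : 0 < (x + y * (1 - y) * (1 - x) ^ 2) / (y * (1 - y) * (1 - x) ^ 2) := by positivity
      positivity

lemma ising_inv (p : ℝ × ℝ) (hp : p ∈ Set.Ioo (0:ℝ) 1 ×ˢ Set.Ioo (0:ℝ) 1) :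
      p.1 = Real.exp (isingMap p).1 * (Real.exp (isingMap p).2 - 1) /
          ((Real.exp ((isingMap p).1 + (isingMap p).2) + 1) * (Real.exp (isingMap p).1 + 1)) ∧
      p.2 = Real.exp (isingMap p).1 * (Real.exp ((isingMap p).1 + (isingMap p).2) + 1) /
          (Real.exp (2 * (isingMap p).1 + (isingMap p).2) + 2 * Real.exp (isingMap p).1 + 1) := by
  obtain ⟨⟨hx0, hx1⟩, hy0, hy1⟩ := hp
  obtain ⟨ha, hb, h1, h2⟩ := ising_aux p.1 p.2 hx0 hx1 hy0 hy1
  have hb0 : (0:ℝ) < (p.1 + p.2 * (1 - p.2) * (1 - p.1) ^ 2) / (p.2 * (1 - p.2) * (1 - p.1) ^ 2) :=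
    lt_trans one_pos hb
  have e1 : Real.exp (isingMap p).1 = p.2 * (1 - p.1) / (p.1 + (1 - p.2) * (1 - p.1)) :=
    Real.exp_log ha
  have e2 : Real.exp (isingMap p).2 =
      (p.1 + p.2 * (1 - p.2) * (1 - p.1) ^ 2) / (p.2 * (1 - p.2) * (1 - p.1) ^ 2) :=
    Real.exp_log hb0
  constructor
  · rw [Real.exp_add, e1, e2]; exact h1
  · rw [Real.exp_add, two_mul, Real.exp_add, Real.exp_add, e1, e2]
    exact h2.trans (by ring)

/-- the map `(p₁,p₂) ↦ (θ,κ)` is a bijection from `(0,1)×(0,1)` onto its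
image in `ℝ × (0,∞)`, with the stated explicit inverse. -/
theorem isingMap_bijective :
    (∀ p ∈ Set.Ioo (0:ℝ) 1 ×ˢ Set.Ioo (0:ℝ) 1, 0 < (isingMap p).2) ∧
    Set.InjOn isingMap (Set.Ioo (0:ℝ) 1 ×ˢ Set.Ioo (0:ℝ) 1) ∧
    (∀ p ∈ Set.Ioo (0:ℝ) 1 ×ˢ Set.Ioo (0:ℝ) 1,
      p.1 = Real.exp (isingMap p).1 * (Real.exp (isingMap p).2 - 1) /
          ((Real.exp ((isingMap p).1 + (isingMap p).2) + 1) * (Real.exp (isingMap p).1 + 1)) ∧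
      p.2 = Real.exp (isingMap p).1 * (Real.exp ((isingMap p).1 + (isingMap p).2) + 1) /
          (Real.exp (2 * (isingMap p).1 + (isingMap p).2) + 2 * Real.exp (isingMap p).1 + 1)) := by
  refine ⟨?_, ?_, fun p hp => ising_inv p hp⟩
  · rintro p ⟨⟨hx0, hx1⟩, hy0, hy1⟩
    obtain ⟨_, hb, _, _⟩ := ising_aux p.1 p.2 hx0 hx1 hy0 hy1
    exact Real.log_pos hb
  · intro p hp q hq h
    obtain ⟨hp1, hp2⟩ := ising_inv p hp
    obtain ⟨hq1, hq2⟩ := ising_inv q hq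
    rw [h] at hp1 hp2
    exact Prod.ext (hp1.trans hq1.symm) (hp2.trans hq2.symm)
end

section
/- The joint law of the NDARMA(1) process (γ_1, ..., γ_T) has the pairwise Ising form: P(γ_1,...,γ_T) ∝ exp(θ γ_1 + Σ_{t=2}^{T-1} θ* γ_t + θ γ_T + Σ_{t=1}^{T-1} κ γ_t γ_{t+1}), where e^θ = p_2(1-p_1)/(p_1+(1-p_2)(1-p_1)), e^{θ*} = p_2(1-p_2)(1-p_1)^2/(p_1+(1-p_2)(1-p_1))^2, and e^κ = (p_1+p_2(1-p_2)(1-p_1)^2)/(p_2(1-p_2)(1-p_1)^2). -/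
/-- The NDARMA(1) joint pmf on binary sequences `(γ_1, …, γ_T)`:
`P(γ) = p₂^{γ₁}(1-p₂)^{1-γ₁} ∏_{t=2}^T [p₁ 1{γ_t = γ_{t-1}} + (1-p₁) p₂^{γ_t}(1-p₂)^{1-γ_t}]`. -/
def ndarmaJointPMF (p₁ p₂ : ℝ) (T : ℕ) (γ : ℕ → ℕ) : ℝ :=
  p₂ ^ (γ 1) * (1 - p₂) ^ (1 - γ 1) *
    ∏ t ∈ Finset.Icc 2 T,
      (p₁ * (if γ t = γ (t-1) then 1 else 0) + (1 - p₁) * p₂ ^ (γ t) * (1 - p₂) ^ (1 - γ t))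

/-- the joint law of the NDARMA(1) process `(γ_1, …, γ_T)` has the pairwise
Ising form: there exists a constant `C > 0`, not depending on the configuration, with
`P(γ_1,…,γ_T) = C · exp(θγ₁ + θ* Σ_{t=2}^{T-1} γ_t + θγ_T + κ Σ_{t=1}^{T-1} γ_t γ_{t+1})`,
where `e^θ = p₂(1-p₁)/(p₁+(1-p₂)(1-p₁))`,
`e^{θ*} = p₂(1-p₂)(1-p₁)²/(p₁+(1-p₂)(1-p₁))²`, and
`e^κ = (p₁+p₂(1-p₂)(1-p₁)²)/(p₂(1-p₂)(1-p₁)²)`. -/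
theorem ndarma_ising_form (p₁ p₂ : ℝ) (hp₁ : p₁ ∈ Set.Ioo (0:ℝ) 1)
    (hp₂ : p₂ ∈ Set.Ioo (0:ℝ) 1) (T : ℕ) (hT : 2 ≤ T) (θ θs κ : ℝ)
    (hθ : Real.exp θ = p₂ * (1 - p₁) / (p₁ + (1 - p₂) * (1 - p₁)))
    (hθs : Real.exp θs =
      p₂ * (1 - p₂) * (1 - p₁) ^ 2 / (p₁ + (1 - p₂) * (1 - p₁)) ^ 2)
    (hκ : Real.exp κ =
      (p₁ + p₂ * (1 - p₂) * (1 - p₁) ^ 2) / (p₂ * (1 - p₂) * (1 - p₁) ^ 2)) :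
    ∃ C : ℝ, 0 < C ∧ ∀ γ : ℕ → ℕ, (∀ t, γ t ≤ 1) →
      ndarmaJointPMF p₁ p₂ T γ =
        C * Real.exp (θ * (γ 1 : ℝ) + θs * ∑ t ∈ Finset.Icc 2 (T-1), (γ t : ℝ)
          + θ * (γ T : ℝ) + κ * ∑ t ∈ Finset.Icc 1 (T-1), (γ t : ℝ) * (γ (t+1) : ℝ)) := by
  obtain ⟨hp₁0, hp₁1⟩ := hp₁
  obtain ⟨hp₂0, hp₂1⟩ := hp₂
  have haPos : (0:ℝ) < p₁ + (1 - p₂) * (1 - p₁) := by nlinarith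
  have ha : p₁ + (1 - p₂) * (1 - p₁) ≠ 0 := ne_of_gt haPos
  have hc : p₂ * (1 - p₁) ≠ 0 := ne_of_gt (mul_pos hp₂0 (by linarith))
  have hcd : p₂ * (1 - p₂) * (1 - p₁) ^ 2 ≠ 0 :=
    ne_of_gt (mul_pos (mul_pos hp₂0 (by linarith)) (pow_pos (by linarith) 2))
  -- the one-step factor identity
  have hstep : ∀ x y : ℕ, x ≤ 1 → y ≤ 1 →
      p₁ * (if y = x then (1:ℝ) else 0) + (1 - p₁) * p₂ ^ y * (1 - p₂) ^ (1 - y)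
        = (p₁ + (1 - p₂) * (1 - p₁)) *
            Real.exp (θs * x - θ * x + θ * y + κ * (x * y)) := by
    intro x y hx hy
    rcases Nat.le_one_iff_eq_zero_or_eq_one.mp hx with rfl | rfl <;>
      rcases Nat.le_one_iff_eq_zero_or_eq_one.mp hy with rfl | rfl
    · rw [show θs * ((0:ℕ):ℝ) - θ * ((0:ℕ):ℝ) + θ * ((0:ℕ):ℝ) + κ * (((0:ℕ):ℝ) * ((0:ℕ):ℝ)) = 0 by push_cast; ring,
        Real.exp_zero, if_pos rfl]
      simp only [pow_zero, pow_one, Nat.sub_zero, Nat.sub_self, one_mul, mul_one]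
      ring
    · rw [show θs * ((0:ℕ):ℝ) - θ * ((0:ℕ):ℝ) + θ * ((1:ℕ):ℝ) + κ * (((0:ℕ):ℝ) * ((1:ℕ):ℝ)) = θ by push_cast; ring,
        hθ, if_neg one_ne_zero]
      simp only [pow_zero, pow_one, Nat.sub_zero, Nat.sub_self, one_mul, mul_one]
      field_simp
      ring
    · rw [show θs * ((1:ℕ):ℝ) - θ * ((1:ℕ):ℝ) + θ * ((0:ℕ):ℝ) + κ * (((1:ℕ):ℝ) * ((0:ℕ):ℝ)) = θs - θ by push_cast; ring,
        Real.exp_sub, hθ, hθs, if_neg zero_ne_one]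
      simp only [pow_zero, pow_one, Nat.sub_zero, Nat.sub_self, one_mul, mul_one]
      field_simp
      ring
    · rw [show θs * ((1:ℕ):ℝ) - θ * ((1:ℕ):ℝ) + θ * ((1:ℕ):ℝ) + κ * (((1:ℕ):ℝ) * ((1:ℕ):ℝ)) = θs + κ by push_cast; ring,
        Real.exp_add, hθs, hκ, if_pos rfl]
      simp only [pow_zero, pow_one, Nat.sub_zero, Nat.sub_self, one_mul, mul_one]
      field_simp
      ring
  have main : ∀ n : ℕ, ∀ γ : ℕ → ℕ, (∀ t, γ t ≤ 1) →
      ndarmaJointPMF p₁ p₂ (n+2) γ =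
        (1 - p₂) * (p₁ + (1 - p₂) * (1 - p₁)) ^ (n+1) *
          Real.exp (θ * (γ 1 : ℝ) + θs * ∑ t ∈ Finset.Icc 2 (n+2-1), (γ t : ℝ)
            + θ * (γ (n+2) : ℝ)
            + κ * ∑ t ∈ Finset.Icc 1 (n+2-1), (γ t : ℝ) * (γ (t+1) : ℝ)) := by
    intro n
    induction n with
    | zero =>
      intro γ hγ
      have h2 : Finset.Icc 2 (0+2-1) = (∅ : Finset ℕ) := by decide
      have h1 : Finset.Icc 1 (0+2-1) = ({1} : Finset ℕ) := by decide
      have hI : Finset.Icc 2 (0+2) = ({2} : Finset ℕ) := by decide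
      rw [ndarmaJointPMF, hI, h2, h1, Finset.prod_singleton, Finset.sum_empty,
        Finset.sum_singleton]
      rcases Nat.le_one_iff_eq_zero_or_eq_one.mp (hγ 1) with e1 | e1 <;>
        rcases Nat.le_one_iff_eq_zero_or_eq_one.mp (hγ 2) with e2 | e2 <;>
        rw [show (2:ℕ) - 1 = 1 from rfl, e1, e2]
      · rw [show θ * ((0:ℕ):ℝ) + θs * 0 + θ * ((0:ℕ):ℝ) + κ * (((0:ℕ):ℝ) * ((0:ℕ):ℝ)) = 0 by push_cast; ring,
          Real.exp_zero, if_pos rfl]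
        simp only [pow_zero, pow_one, Nat.sub_zero, Nat.sub_self, one_mul, mul_one]
        ring
      · rw [show θ * ((0:ℕ):ℝ) + θs * 0 + θ * ((1:ℕ):ℝ) + κ * (((0:ℕ):ℝ) * ((1:ℕ):ℝ)) = θ by push_cast; ring,
          hθ, if_neg one_ne_zero]
        simp only [pow_zero, pow_one, Nat.sub_zero, Nat.sub_self, one_mul, mul_one]
        field_simp
        ring
      · rw [show θ * ((1:ℕ):ℝ) + θs * 0 + θ * ((0:ℕ):ℝ) + κ * (((1:ℕ):ℝ) * ((0:ℕ):ℝ)) = θ by push_cast; ring,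
          hθ, if_neg zero_ne_one]
        simp only [pow_zero, pow_one, Nat.sub_zero, Nat.sub_self, one_mul, mul_one]
        field_simp
        ring
      · rw [show θ * ((1:ℕ):ℝ) + θs * 0 + θ * ((1:ℕ):ℝ) + κ * (((1:ℕ):ℝ) * ((1:ℕ):ℝ)) = θ + (θ + κ) by push_cast; ring,
          Real.exp_add, Real.exp_add, hθ, hκ, if_pos rfl]
        simp only [pow_zero, pow_one, Nat.sub_zero, Nat.sub_self, one_mul, mul_one]
        field_simp
        ring
    | succ m ih =>
      intro γ hγ
      have hprod : ndarmaJointPMF p₁ p₂ (m+1+2) γ =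
          ndarmaJointPMF p₁ p₂ (m+2) γ *
            (p₁ * (if γ (m+3) = γ (m+2) then (1:ℝ) else 0)
              + (1 - p₁) * p₂ ^ (γ (m+3)) * (1 - p₂) ^ (1 - γ (m+3))) := by
        rw [ndarmaJointPMF, ndarmaJointPMF,
          show m+1+2 = (m+2)+1 from rfl,
          Finset.prod_Icc_succ_top (by omega : 2 ≤ (m+2)+1), ← mul_assoc]
        rfl
      rw [hprod, ih γ hγ, hstep (γ (m+2)) (γ (m+3)) (hγ (m+2)) (hγ (m+3))]
      have hs1 : ∑ t ∈ Finset.Icc 2 (m+1+2-1), (γ t : ℝ)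
          = (∑ t ∈ Finset.Icc 2 (m+2-1), (γ t : ℝ)) + (γ (m+2) : ℝ) := by
        rw [show m+1+2-1 = (m+2-1)+1 from rfl]
        exact Finset.sum_Icc_succ_top (by omega) _
      have hs2 : ∑ t ∈ Finset.Icc 1 (m+1+2-1), (γ t : ℝ) * (γ (t+1) : ℝ)
          = (∑ t ∈ Finset.Icc 1 (m+2-1), (γ t : ℝ) * (γ (t+1) : ℝ))
            + (γ (m+2) : ℝ) * (γ (m+3) : ℝ) := by
        rw [show m+1+2-1 = (m+2-1)+1 from rfl]
        exact Finset.sum_Icc_succ_top (by omega) _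
      rw [hs1, hs2]
      have key : ∀ A B : ℝ,
          (1 - p₂) * (p₁ + (1 - p₂) * (1 - p₁)) ^ (m + 1) * Real.exp A *
              ((p₁ + (1 - p₂) * (1 - p₁)) * Real.exp B)
            = (1 - p₂) * (p₁ + (1 - p₂) * (1 - p₁)) ^ (m + 1 + 1) * Real.exp (A + B) := by
        intro A B
        rw [Real.exp_add, pow_succ]
        ring
      rw [key]
      congr 1
      congr 1
      ring
  obtain ⟨m, rfl⟩ : ∃ m, T = m + 2 := ⟨T - 2, by omega⟩
  refine ⟨(1 - p₂) * (p₁ + (1 - p₂) * (1 - p₁)) ^ (m+1),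
    mul_pos (by linarith) (pow_pos haPos _), main m⟩
end
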